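/- arXiv:0809.4877 — 2 statements merged into one kernel-verified Lean document; each statement's English description precedes it below -/
import Mathlib

section
/- For 0 < t < n, the self-similar Cantor set C(t,a) ⊂ ℝ^n, built from a cube of side a by repeatedly keeping 2^n corner subcubes of side d·a where d ∈ (0, 1/2) satisfies 2^n d^t = 1, is t-regular. -/
open MeasureTheory Metric Set

/-- `E` is an `s`-regular (Ahlfors–David regular) subset of the metric space `X`,
with constant `C ≥ 1`, witnessed by the Borel (outer) measure `μ`:
`μ` vanishes off `E` and `r^s ≤ μ(B(x,r)) ≤ C r^s` for `x ∈ E`, `0 < r ≤ diam E`, `r < ∞`. -/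
def IsAhlforsRegular {X : Type*} [MetricSpace X] [MeasurableSpace X]
    (s C : ℝ) (E : Set X) (μ : Measure X) : Prop :=
  IsClosed E ∧ 1 ≤ C ∧ μ Eᶜ = 0 ∧
    ∀ x ∈ E, ∀ r : ℝ, 0 < r → ENNReal.ofReal r ≤ EMetric.diam E →
      ENNReal.ofReal (r ^ s) ≤ μ (closedBall x r) ∧
        μ (closedBall x r) ≤ ENNReal.ofReal (C * r ^ s)

/-- The similarity mapping the cube `[0,a]^n` onto the corner subcube of relative
side `d` sitting at the corner selected by `ε`. -/
def stdCornerMap (n : ℕ) (a d : ℝ) (ε : Fin n → Bool)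
    (x : EuclideanSpace ℝ (Fin n)) : EuclideanSpace ℝ (Fin n) :=
  WithLp.toLp 2 (fun i => d * x i + (if ε i then (1 - d) * a else 0))

/-- The `k`-th generation of the Cantor construction: the union of the `2^(nk)`
cubes of side `d^k a` obtained by iterating the corner maps on the cube `[0,a]^n`. -/
def stdCantorApprox (n : ℕ) (a d : ℝ) : ℕ → Set (EuclideanSpace ℝ (Fin n))
  | 0 => {x | ∀ i, x i ∈ Set.Icc 0 a}
  | k + 1 => ⋃ ε : Fin n → Bool, stdCornerMap n a d ε '' stdCantorApprox n a d k

/-- The standard self-similar Cantor set `C(t,a) ⊂ ℝⁿ`, built from a cube of side `a`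
by repeatedly keeping the `2^n` corner subcubes of relative side `d` with `2^n d^t = 1`,
i.e. `d = 2^(-n/t)`. -/
noncomputable def stdCantorSet (n : ℕ) (t a : ℝ) : Set (EuclideanSpace ℝ (Fin n)) :=
  ⋂ k : ℕ, stdCantorApprox n a ((2 : ℝ) ^ (-(n : ℝ) / t)) k

/-!
Points of the Cantor set are coded by addresses `ω : ℕ → (Fin n → Bool)`, infinite words over the
`2^n` corners, and `μ` is a multiple of the image of the uniform product measure on addresses.
The cylinder fixing the first `k` letters has measure `2^(-nk) = (d^k)^t` and its image lies in a
cube of side `d^k a`, which gives the lower bound. For the upper bound, two cubes of generation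
`k + 1` with different addresses are at distance at least `(1 - 2d) d^k a` (this is where
`d < 1/2` enters), so a ball of radius `r < (1 - 2d) d^k a / 2` meets the image of a single
cylinder of length `k + 1`.
-/

theorem EuclideanSpace.dist_le_sqrt_card_mul {ι : Type*} [Fintype ι] {x y : EuclideanSpace ℝ ι}
    {c : ℝ} (hc : 0 ≤ c) (h : ∀ i, dist (x i) (y i) ≤ c) :
    dist x y ≤ √(Fintype.card ι) * c := by
  rw [EuclideanSpace.dist_eq, ← Real.sqrt_sq hc, ← Real.sqrt_mul (Nat.cast_nonneg _)]
  gcongr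
  calc ∑ i, dist (x i) (y i) ^ 2 ≤ ∑ _i : ι, c ^ 2 := by gcongr with i; exact h i
    _ = Fintype.card ι * c ^ 2 := by simp

lemma exists_mul_pow_le_and_forall_lt {c d r : ℝ} (hd : d < 1) (hc : 0 < c) (hr : 0 < r) :
    ∃ m : ℕ, c * d ^ m ≤ r ∧ ∀ j < m, r < c * d ^ j := by
  classical
  have hex : ∃ m : ℕ, c * d ^ m ≤ r := by
    obtain ⟨m, hm⟩ := exists_pow_lt_of_lt_one (div_pos hr hc) hd
    exact ⟨m, by rw [lt_div_iff₀ hc] at hm; linarith⟩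
  exact ⟨Nat.find hex, Nat.find_spec hex, fun j hj => not_le.1 (Nat.find_min hex hj)⟩

namespace StdCantor

variable {n : ℕ} {a d : ℝ}

lemma stdCornerMap_apply (ε : Fin n → Bool) (x : EuclideanSpace ℝ (Fin n)) (i : Fin n) :
    stdCornerMap n a d ε x i = d * x i + if ε i then (1 - d) * a else 0 := rfl

lemma dist_stdCornerMap (hd : 0 ≤ d) (ε : Fin n → Bool) (x y : EuclideanSpace ℝ (Fin n)) :
    dist (stdCornerMap n a d ε x) (stdCornerMap n a d ε y) = d * dist x y := by
  have h : stdCornerMap n a d ε x - stdCornerMap n a d ε y = d • (x - y) := by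
    ext i
    simp only [PiLp.sub_apply, PiLp.smul_apply, stdCornerMap_apply, smul_eq_mul]
    ring
  rw [dist_eq_norm, h, norm_smul, Real.norm_of_nonneg hd, dist_eq_norm]

lemma continuous_stdCornerMap (ε : Fin n → Bool) : Continuous (stdCornerMap n a d ε) := by
  unfold stdCornerMap
  fun_prop

lemma isCompact_stdCantorApprox (k : ℕ) : IsCompact (stdCantorApprox n a d k) := by
  induction k with
  | zero =>
    have h : stdCantorApprox n a d 0 = WithLp.ofLp ⁻¹' univ.pi fun _ => Icc 0 a := by
      ext x
      simp only [mem_preimage, mem_univ_pi]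
      rfl
    rw [h]
    exact (PiLp.homeomorph 2 _).isCompact_preimage.2 (isCompact_univ_pi fun _ => isCompact_Icc)
  | succ k ih => exact isCompact_iUnion fun ε => ih.image (continuous_stdCornerMap ε)

lemma dist_le_of_mem_stdCantorApprox_zero (ha : 0 ≤ a) {p q : EuclideanSpace ℝ (Fin n)}
    (hp : p ∈ stdCantorApprox n a d 0) (hq : q ∈ stdCantorApprox n a d 0) :
    dist p q ≤ √n * a := by
  simpa using EuclideanSpace.dist_le_sqrt_card_mul ha fun i =>
    (Real.dist_le_of_mem_Icc (hp i) (hq i)).trans_eq (sub_zero a)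

lemma mapsTo_stdCornerMap (ha : 0 ≤ a) (hd0 : 0 ≤ d) (hd1 : d ≤ 1) (ε : Fin n → Bool) :
    MapsTo (stdCornerMap n a d ε) (stdCantorApprox n a d 0) (stdCantorApprox n a d 0) := by
  intro x hx i
  obtain ⟨hx0, hxa⟩ := hx i
  rw [stdCornerMap_apply]
  split_ifs <;> constructor <;> nlinarith

lemma le_abs_stdCornerMap_sub (hd0 : 0 ≤ d) {ε ε' : Fin n → Bool} {i : Fin n} (h : ε i ≠ ε' i)
    {x y : EuclideanSpace ℝ (Fin n)} (hx : x ∈ stdCantorApprox n a d 0)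
    (hy : y ∈ stdCantorApprox n a d 0) :
    (1 - 2 * d) * a ≤ |stdCornerMap n a d ε x i - stdCornerMap n a d ε' y i| := by
  obtain ⟨hx0, hxa⟩ := hx i
  obtain ⟨hy0, hya⟩ := hy i
  rw [stdCornerMap_apply, stdCornerMap_apply, le_abs]
  revert h
  cases ε i <;> cases ε' i <;> simp only [ne_eq, not_true_eq_false, IsEmpty.forall_iff,
    Bool.false_eq_true, Bool.true_eq_false, if_true, if_false, not_false_eq_true, forall_const]
  · exact Or.inr (by nlinarith [mul_le_mul_of_nonneg_left hxa hd0, mul_nonneg hd0 hy0])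
  · exact Or.inl (by nlinarith [mul_le_mul_of_nonneg_left hya hd0, mul_nonneg hd0 hx0])

/-- An address `ω` is an infinite word over the `2^n` corners; `cube n a d k ω` is the cube of
generation `k` selected by its first `k` letters. -/
def cube (n : ℕ) (a d : ℝ) : ℕ → (ℕ → Fin n → Bool) → Set (EuclideanSpace ℝ (Fin n))
  | 0, _ => stdCantorApprox n a d 0
  | k + 1, ω => stdCornerMap n a d (ω 0) '' cube n a d k fun j => ω (j + 1)

lemma stdCantorApprox_eq_iUnion_cube (k : ℕ) :
    stdCantorApprox n a d k = ⋃ ω, cube n a d k ω := by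
  induction k with
  | zero => exact (iUnion_const _).symm
  | succ k ih =>
    simp only [stdCantorApprox, ih, image_iUnion, cube]
    apply Subset.antisymm
    · exact iUnion_subset fun ε => iUnion_subset fun ω =>
        subset_iUnion_of_subset (Stream'.cons ε ω) subset_rfl
    · exact iUnion_subset fun ω =>
        subset_iUnion_of_subset (ω 0) (subset_iUnion_of_subset (fun j => ω (j + 1)) subset_rfl)

lemma cube_congr {k : ℕ} {ω ω' : ℕ → Fin n → Bool} (h : ∀ j < k, ω j = ω' j) :
    cube n a d k ω = cube n a d k ω' := by
  induction k generalizing ω ω' with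
  | zero => rfl
  | succ k ih =>
    simp only [cube]
    rw [h 0 k.succ_pos, ih fun j hj => h (j + 1) (by omega)]

lemma cube_subset_stdCantorApprox_zero (ha : 0 ≤ a) (hd0 : 0 ≤ d) (hd1 : d ≤ 1) (k : ℕ)
    (ω : ℕ → Fin n → Bool) : cube n a d k ω ⊆ stdCantorApprox n a d 0 := by
  induction k generalizing ω with
  | zero => exact subset_rfl
  | succ k ih => exact (image_mono (ih _)).trans (mapsTo_stdCornerMap ha hd0 hd1 _).image_subset

lemma dist_le_of_mem_cube (ha : 0 ≤ a) (hd0 : 0 ≤ d) {k : ℕ} {ω : ℕ → Fin n → Bool}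
    {p q : EuclideanSpace ℝ (Fin n)} (hp : p ∈ cube n a d k ω) (hq : q ∈ cube n a d k ω) :
    dist p q ≤ √n * a * d ^ k := by
  induction k generalizing ω p q with
  | zero => simpa using dist_le_of_mem_stdCantorApprox_zero ha hp hq
  | succ k ih =>
    obtain ⟨p, hp, rfl⟩ := hp
    obtain ⟨q, hq, rfl⟩ := hq
    rw [dist_stdCornerMap hd0, pow_succ]
    nlinarith [ih hp hq]

lemma le_dist_of_mem_cube_of_head_ne (ha : 0 ≤ a) (hd0 : 0 ≤ d) (hd1 : d ≤ 1) {k : ℕ}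
    {ω ω' : ℕ → Fin n → Bool} (h : ω 0 ≠ ω' 0) {p q : EuclideanSpace ℝ (Fin n)}
    (hp : p ∈ cube n a d (k + 1) ω) (hq : q ∈ cube n a d (k + 1) ω') :
    (1 - 2 * d) * a ≤ dist p q := by
  obtain ⟨i, hi⟩ := Function.ne_iff.1 h
  obtain ⟨p, hp, rfl⟩ := hp
  obtain ⟨q, hq, rfl⟩ := hq
  exact (le_abs_stdCornerMap_sub hd0 hi (cube_subset_stdCantorApprox_zero ha hd0 hd1 _ _ hp)
    (cube_subset_stdCantorApprox_zero ha hd0 hd1 _ _ hq)).trans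
    (by rw [← Real.dist_eq]; exact PiLp.dist_apply_le _ _ i)

lemma le_dist_of_mem_cube_of_ne (ha : 0 ≤ a) (hd0 : 0 ≤ d) (hd : d ≤ 1 / 2) {j : ℕ}
    {ω ω' : ℕ → Fin n → Bool} (h : ω j ≠ ω' j) {p q : EuclideanSpace ℝ (Fin n)}
    (hp : p ∈ cube n a d (j + 1) ω) (hq : q ∈ cube n a d (j + 1) ω') :
    (1 - 2 * d) * a * d ^ j ≤ dist p q := by
  have hd1 : d ≤ 1 := by linarith
  induction j generalizing ω ω' p q with
  | zero => simpa using le_dist_of_mem_cube_of_head_ne ha hd0 hd1 h hp hq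
  | succ j ih =>
    by_cases h0 : ω 0 = ω' 0
    · obtain ⟨p, hp, rfl⟩ := hp
      obtain ⟨q, hq, rfl⟩ := hq
      rw [h0, dist_stdCornerMap hd0, pow_succ]
      nlinarith [ih h hp hq]
    · have : (1 - 2 * d) * a * d ^ (j + 1) ≤ (1 - 2 * d) * a :=
        mul_le_of_le_one_right (by nlinarith) (pow_le_one₀ hd0 hd1)
      exact this.trans (le_dist_of_mem_cube_of_head_ne ha hd0 hd1 h0 hp hq)

/-- The point of `⋂ k, cube n a d k ω`. -/
noncomputable def coding (n : ℕ) (a d : ℝ) (ω : ℕ → Fin n → Bool) : EuclideanSpace ℝ (Fin n) :=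
  WithLp.toLp 2 fun i => ∑' k, d ^ k * if ω k i then (1 - d) * a else 0

lemma coding_term_mem_Icc (ha : 0 ≤ a) (hd0 : 0 ≤ d) (hd1 : d ≤ 1) (b : Bool) (k : ℕ) :
    d ^ k * (if b then (1 - d) * a else 0) ∈ Icc 0 (d ^ k * ((1 - d) * a)) := by
  have h : 0 ≤ d ^ k * ((1 - d) * a) := mul_nonneg (pow_nonneg hd0 k) (mul_nonneg (by linarith) ha)
  split_ifs
  · exact ⟨h, le_rfl⟩
  · simpa using h

lemma summable_coding_term (ha : 0 ≤ a) (hd0 : 0 ≤ d) (hd1 : d < 1) (ω : ℕ → Fin n → Bool)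
    (i : Fin n) : Summable fun k => d ^ k * if ω k i then (1 - d) * a else 0 :=
  .of_nonneg_of_le (fun k => (coding_term_mem_Icc ha hd0 hd1.le _ k).1)
    (fun k => (coding_term_mem_Icc ha hd0 hd1.le _ k).2)
    ((summable_geometric_of_lt_one hd0 hd1).mul_right _)

lemma coding_mem_stdCantorApprox_zero (ha : 0 ≤ a) (hd0 : 0 ≤ d) (hd1 : d < 1)
    (ω : ℕ → Fin n → Bool) : coding n a d ω ∈ stdCantorApprox n a d 0 := by
  intro i
  refine ⟨tsum_nonneg fun k => (coding_term_mem_Icc ha hd0 hd1.le _ k).1, ?_⟩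
  calc ∑' k, d ^ k * (if ω k i then (1 - d) * a else 0)
      ≤ ∑' k, d ^ k * ((1 - d) * a) :=
        (summable_coding_term ha hd0 hd1 ω i).tsum_le_tsum
          (fun k => (coding_term_mem_Icc ha hd0 hd1.le _ k).2)
          ((summable_geometric_of_lt_one hd0 hd1).mul_right _)
    _ = a := by
      rw [tsum_mul_right, tsum_geometric_of_lt_one hd0 hd1]
      field_simp [(sub_pos.2 hd1).ne']

lemma coding_eq_stdCornerMap (ha : 0 ≤ a) (hd0 : 0 ≤ d) (hd1 : d < 1) (ω : ℕ → Fin n → Bool) :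
    coding n a d ω = stdCornerMap n a d (ω 0) (coding n a d fun j => ω (j + 1)) := by
  ext i
  simp only [coding, stdCornerMap_apply, PiLp.toLp_apply]
  rw [(summable_coding_term ha hd0 hd1 ω i).tsum_eq_zero_add, ← tsum_mul_left]
  simp only [pow_zero, one_mul, pow_succ]
  rw [add_comm]
  congr 1
  exact tsum_congr fun k => by ring

lemma coding_mem_cube (ha : 0 ≤ a) (hd0 : 0 ≤ d) (hd1 : d < 1) (k : ℕ) (ω : ℕ → Fin n → Bool) :
    coding n a d ω ∈ cube n a d k ω := by
  induction k generalizing ω with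
  | zero => exact coding_mem_stdCantorApprox_zero ha hd0 hd1 ω
  | succ k ih =>
    rw [coding_eq_stdCornerMap ha hd0 hd1]
    exact mem_image_of_mem _ (ih _)

lemma coding_mem_iInter_stdCantorApprox (ha : 0 ≤ a) (hd0 : 0 ≤ d) (hd1 : d < 1)
    (ω : ℕ → Fin n → Bool) : coding n a d ω ∈ ⋂ k, stdCantorApprox n a d k :=
  mem_iInter.2 fun k => (stdCantorApprox_eq_iUnion_cube k).symm ▸
    mem_iUnion_of_mem ω (coding_mem_cube ha hd0 hd1 k ω)

lemma continuous_coding (ha : 0 ≤ a) (hd0 : 0 ≤ d) (hd1 : d < 1) :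
    Continuous (coding n a d) := by
  refine (PiLp.continuous_toLp 2 _).comp (continuous_pi fun i => ?_)
  refine continuous_tsum (fun k => ?_)
    ((summable_geometric_of_lt_one hd0 hd1).mul_right ((1 - d) * a)) fun k ω => ?_
  · exact (continuous_of_discreteTopology (f := fun b : Bool =>
      d ^ k * if b then (1 - d) * a else 0)).comp ((continuous_apply i).comp (continuous_apply k))
  · obtain ⟨h0, h1⟩ := coding_term_mem_Icc ha hd0 hd1.le (ω k i) k
    rwa [Real.norm_of_nonneg h0]

noncomputable def bernoulliMeasure (n : ℕ) : Measure (ℕ → Fin n → Bool) :=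
  Measure.infinitePi fun _ => (PMF.uniformOfFintype (Fin n → Bool)).toMeasure

def cylinder (ω : ℕ → Fin n → Bool) (k : ℕ) : Set (ℕ → Fin n → Bool) :=
  (Finset.range k : Set ℕ).pi fun j => {ω j}

lemma mem_cylinder {ω ω' : ℕ → Fin n → Bool} {k : ℕ} :
    ω' ∈ cylinder ω k ↔ ∀ j < k, ω' j = ω j := by
  simp [cylinder]

lemma bernoulliMeasure_cylinder {s : ℝ} (hd0 : 0 ≤ d) (hds : d ^ s = ((2 : ℝ) ^ n)⁻¹)
    (ω : ℕ → Fin n → Bool) (k : ℕ) :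
    bernoulliMeasure n (cylinder ω k) = ENNReal.ofReal ((d ^ k) ^ s) := by
  rw [bernoulliMeasure, cylinder, Measure.infinitePi_pi
    (μ := fun _ => (PMF.uniformOfFintype (Fin n → Bool)).toMeasure) fun _ _ => .singleton _]
  simp only [PMF.toMeasure_apply_singleton _ _ (measurableSet_singleton _),
    PMF.uniformOfFintype_apply, Finset.prod_const, Finset.card_range]
  rw [← Real.rpow_natCast d k, ← Real.rpow_mul hd0, mul_comm, Real.rpow_mul hd0, hds,
    Real.rpow_natCast, ENNReal.ofReal_pow (by positivity),
    ENNReal.ofReal_inv_of_pos (by positivity)]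
  simp

lemma coding_mem_cube_of_mem_cylinder (ha : 0 ≤ a) (hd0 : 0 ≤ d) (hd1 : d < 1)
    {ω ω' : ℕ → Fin n → Bool} {k : ℕ} (h : ω' ∈ cylinder ω k) :
    coding n a d ω' ∈ cube n a d k ω :=
  cube_congr (mem_cylinder.1 h) ▸ coding_mem_cube ha hd0 hd1 k ω'

lemma preimage_closedBall_subset_cylinder (ha : 0 ≤ a) (hd0 : 0 ≤ d) (hd : d < 1 / 2)
    {x : EuclideanSpace ℝ (Fin n)} {r : ℝ} {k : ℕ} (hk : ∀ j < k, 2 * r < (1 - 2 * d) * a * d ^ j)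
    {ω₀ : ℕ → Fin n → Bool} (hω₀ : coding n a d ω₀ ∈ closedBall x r) :
    coding n a d ⁻¹' closedBall x r ⊆ cylinder ω₀ k := by
  have hd1 : d < 1 := by linarith
  refine fun ω hω => mem_cylinder.2 fun j hj => by_contra fun hne => ?_
  have hsep := le_dist_of_mem_cube_of_ne ha hd0 hd.le hne (coding_mem_cube ha hd0 hd1 _ ω)
    (coding_mem_cube ha hd0 hd1 _ ω₀)
  have hdist := dist_triangle_right (coding n a d ω) (coding n a d ω₀) x
  linarith [hk j hj, mem_closedBall.1 hω, mem_closedBall.1 hω₀]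

lemma bernoulliMeasure_preimage_closedBall_le {s : ℝ} (hs : 0 ≤ s) (ha : 0 < a) (hd0 : 0 < d)
    (hd : d < 1 / 2) (hds : d ^ s = ((2 : ℝ) ^ n)⁻¹) (x : EuclideanSpace ℝ (Fin n)) {r : ℝ}
    (hr : 0 < r) :
    bernoulliMeasure n (coding n a d ⁻¹' closedBall x r) ≤
      ENNReal.ofReal ((2 * r / ((1 - 2 * d) * a)) ^ s) := by
  rcases (coding n a d ⁻¹' closedBall x r).eq_empty_or_nonempty with h | ⟨ω₀, hω₀⟩
  · simp [h]
  have hc : 0 < (1 - 2 * d) * a := mul_pos (by linarith) ha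
  obtain ⟨m, hm, hmin⟩ :=
    exists_mul_pow_le_and_forall_lt (by linarith : d < 1) hc (by positivity : 0 < 2 * r)
  calc bernoulliMeasure n (coding n a d ⁻¹' closedBall x r)
      ≤ bernoulliMeasure n (cylinder ω₀ m) :=
        measure_mono (preimage_closedBall_subset_cylinder ha.le hd0.le hd hmin hω₀)
    _ = ENNReal.ofReal ((d ^ m) ^ s) := bernoulliMeasure_cylinder hd0.le hds ω₀ m
    _ ≤ ENNReal.ofReal ((2 * r / ((1 - 2 * d) * a)) ^ s) := by
        gcongr
        rw [le_div_iff₀ hc]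
        linarith

lemma le_bernoulliMeasure_preimage_closedBall {s : ℝ} (hs : 0 ≤ s) (hn : n ≠ 0) (ha : 0 < a)
    (hd0 : 0 < d) (hd1 : d < 1) (hds : d ^ s = ((2 : ℝ) ^ n)⁻¹) {x : EuclideanSpace ℝ (Fin n)}
    (hx : x ∈ ⋂ k, stdCantorApprox n a d k) {r : ℝ} (hr : 0 < r) (hra : r ≤ √n * a) :
    ENNReal.ofReal ((r * d / (√n * a)) ^ s) ≤
      bernoulliMeasure n (coding n a d ⁻¹' closedBall x r) := by
  have hc : 0 < √n * a := by positivity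
  obtain ⟨m, hm, hmin⟩ := exists_mul_pow_le_and_forall_lt hd1 hc hr
  obtain ⟨ω, hω⟩ := mem_iUnion.1 ((stdCantorApprox_eq_iUnion_cube m) ▸ mem_iInter.1 hx m)
  have hrd : r * d ≤ √n * a * d ^ m := by
    rcases m with _ | m
    · nlinarith
    · rw [pow_succ]
      nlinarith [hmin m m.lt_succ_self]
  calc ENNReal.ofReal ((r * d / (√n * a)) ^ s) ≤ ENNReal.ofReal ((d ^ m) ^ s) := by
        gcongr
        rw [div_le_iff₀ hc]
        linarith
    _ = bernoulliMeasure n (cylinder ω m) := (bernoulliMeasure_cylinder hd0.le hds ω m).symm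
    _ ≤ bernoulliMeasure n (coding n a d ⁻¹' closedBall x r) :=
        measure_mono fun ω' hω' => mem_closedBall.2 ((dist_le_of_mem_cube ha.le hd0.le
          (coding_mem_cube_of_mem_cylinder ha.le hd0.le hd1 hω') hω).trans hm)

lemma isClosed_iInter_stdCantorApprox : IsClosed (⋂ k, stdCantorApprox n a d k) :=
  isClosed_iInter fun k => (isCompact_stdCantorApprox k).isClosed

lemma ediam_iInter_stdCantorApprox_le (ha : 0 ≤ a) :
    Metric.ediam (⋂ k, stdCantorApprox n a d k) ≤ ENNReal.ofReal (√n * a) :=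
  Metric.ediam_le fun p hp q hq => by
    rw [edist_dist]
    exact ENNReal.ofReal_le_ofReal
      (dist_le_of_mem_stdCantorApprox_zero ha (mem_iInter.1 hp 0) (mem_iInter.1 hq 0))

theorem isAhlforsRegular_iInter_stdCantorApprox {s : ℝ} (hs : 0 < s) (ha : 0 < a) (hd0 : 0 < d)
    (hd : d < 1 / 2) (hds : d ^ s = ((2 : ℝ) ^ n)⁻¹) :
    IsAhlforsRegular s ((2 * √n / (d * (1 - 2 * d))) ^ s) (⋂ k, stdCantorApprox n a d k)
      (ENNReal.ofReal ((√n * a / d) ^ s) • (bernoulliMeasure n).map (coding n a d)) := by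
  have hd1 : d < 1 := by linarith
  have hn : n ≠ 0 := by
    rintro rfl
    simpa [hds] using Real.rpow_lt_one hd0.le hd1 hs
  have hn1 : 1 ≤ √n := Real.one_le_sqrt.2 (by exact_mod_cast Nat.one_le_iff_ne_zero.2 hn)
  have hμ (t : Set (EuclideanSpace ℝ (Fin n))) (ht : MeasurableSet t) :
      (ENNReal.ofReal ((√n * a / d) ^ s) • (bernoulliMeasure n).map (coding n a d)) t =
        ENNReal.ofReal ((√n * a / d) ^ s) * bernoulliMeasure n (coding n a d ⁻¹' t) := by
    rw [Measure.smul_apply, Measure.map_apply (continuous_coding ha.le hd0.le hd1).measurable ht,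
      smul_eq_mul]
  refine ⟨isClosed_iInter_stdCantorApprox, Real.one_le_rpow ?_ hs.le, ?_, fun x hx r hr hrE => ?_⟩
  · rw [le_div_iff₀ (by nlinarith)]
    nlinarith
  · have hpre : coding n a d ⁻¹' (⋂ k, stdCantorApprox n a d k)ᶜ = ∅ :=
      eq_empty_of_forall_notMem fun ω hω =>
        hω (coding_mem_iInter_stdCantorApprox ha.le hd0.le hd1 ω)
    rw [hμ _ isClosed_iInter_stdCantorApprox.measurableSet.compl, hpre, measure_empty, mul_zero]
  have hra : r ≤ √n * a := (ENNReal.ofReal_le_ofReal_iff (by positivity)).1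
    (hrE.trans (ediam_iInter_stdCantorApprox_le ha.le))
  rw [hμ _ measurableSet_closedBall]
  constructor
  · calc ENNReal.ofReal (r ^ s)
        = ENNReal.ofReal ((√n * a / d) ^ s) * ENNReal.ofReal ((r * d / (√n * a)) ^ s) := by
          rw [← ENNReal.ofReal_mul (by positivity), ← Real.mul_rpow (by positivity) (by positivity)]
          congr 2
          field_simp
      _ ≤ _ := by
          gcongr
          exact le_bernoulliMeasure_preimage_closedBall hs.le hn ha hd0 hd1 hds hx hr hra
  · calc ENNReal.ofReal ((√n * a / d) ^ s) * bernoulliMeasure n (coding n a d ⁻¹' closedBall x r)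
        ≤ ENNReal.ofReal ((√n * a / d) ^ s) * ENNReal.ofReal ((2 * r / ((1 - 2 * d) * a)) ^ s) := by
          gcongr
          exact bernoulliMeasure_preimage_closedBall_le hs.le ha hd0 hd hds x hr
      _ = ENNReal.ofReal ((2 * √n / (d * (1 - 2 * d))) ^ s * r ^ s) := by
          have : 0 < 1 - 2 * d := by linarith
          rw [← ENNReal.ofReal_mul (by positivity), ← Real.mul_rpow (by positivity) (by positivity),
            ← Real.mul_rpow (by positivity) hr.le]
          congr 2
          field_simp

end StdCantor

theorem stmt9 (n : ℕ) (t a : ℝ) (ht : 0 < t) (htn : t < n) (ha : 0 < a) :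
    ∃ (C : ℝ) (μ : Measure (EuclideanSpace ℝ (Fin n))),
      IsAhlforsRegular t C (stdCantorSet n t a) μ := by
  have hd0 : (0 : ℝ) < 2 ^ (-(n : ℝ) / t) := by positivity
  have hd : (2 : ℝ) ^ (-(n : ℝ) / t) < 1 / 2 := by
    rw [one_div, ← Real.rpow_neg_one]
    exact Real.rpow_lt_rpow_of_exponent_lt one_lt_two (by rw [div_lt_iff₀ ht]; linarith)
  have hds : ((2 : ℝ) ^ (-(n : ℝ) / t)) ^ t = ((2 : ℝ) ^ n)⁻¹ := by
    rw [← Real.rpow_mul zero_le_two, div_mul_cancel₀ _ ht.ne', Real.rpow_neg zero_le_two,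
      Real.rpow_natCast]
  exact ⟨_, _, StdCantor.isAhlforsRegular_iInter_stdCantorApprox ht ha hd0 hd hds⟩
end

section
/- Direction-finding lemma: let 0 < δ with C_1(n) C_2(n) δ < 1 (dimensional constants), let ε = δ^{2n+3}, and let x_1,…,x_m, y_1,…,y_m ∈ B(0,1) ⊂ ℝ^n with m ≤ C_2(n)^{1/2} δ^{-n} and pairwise distances |x_i − x_j| ≥ δ and |y_i − y_j| ≥ δ for i ≠ j. Then there exists a unit vector θ ∈ S^{n−1} such that |θ·(x_i − x_j)| > 5ε and |θ·(y_i − y_j)| > 5ε for all i ≠ j. -/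
/-!
A direction `θ` is bad for a difference `v` when it lies in the slab `|⟪θ, v⟫| ≤ c`. Inside the
unit ball such a slab has volume `O(c / ‖v‖)`, so with `c = 5 δ^(2n+3)`, `‖v‖ ≥ δ` and at most
`2 m² ≤ 2 δ^(-2n)` differences, the bad slabs have total volume `O(δ²)`, which is smaller than the
volume of the unit ball once `δ` is small. Any point of the ball outside all slabs, pushed out
radially to the sphere, is a good direction.
-/

open Metric MeasureTheory Finset

theorem volume_setOf_abs_apply_le_inter_closedBall_le {n : ℕ} (i : Fin n) (c : ℝ) :
    volume ({w : EuclideanSpace ℝ (Fin n) | |w i| ≤ c} ∩ closedBall 0 1)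
      ≤ ENNReal.ofReal (2 ^ n * c) := by
  obtain ⟨k, rfl⟩ : ∃ k, n = k + 1 := ⟨n - 1, by have := i.pos; omega⟩
  set t : Fin (k + 1) → Set ℝ := Function.update (fun _ ↦ Set.Icc (-1) 1) i (Set.Icc (-c) c)
  have hsub : {w : EuclideanSpace ℝ (Fin (k + 1)) | |w i| ≤ c} ∩ closedBall 0 1
      ⊆ WithLp.ofLp ⁻¹' Set.univ.pi t := by
    rintro w ⟨hwi, hw⟩ j -
    rcases eq_or_ne j i with rfl | hj
    · simpa [t] using abs_le.1 hwi
    · simpa [t, hj, abs_le] using (PiLp.norm_apply_le w j).trans (mem_closedBall_zero_iff.1 hw)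
  have hvol : ∀ j,
      volume (t j) = Function.update (fun _ ↦ (2 : ENNReal)) i (ENNReal.ofReal (2 * c)) j := by
    intro j
    rcases eq_or_ne j i with rfl | hj
    · simp [t, Real.volume_Icc, two_mul]
    · simp [t, hj, Real.volume_Icc, one_add_one_eq_two]
  calc _ ≤ volume (WithLp.ofLp ⁻¹' Set.univ.pi t) := measure_mono hsub
    _ = ∏ j, volume (t j) := by
      rw [(PiLp.volume_preserving_ofLp _).measure_preimage
        (MeasurableSet.univ_pi fun j ↦ ?_).nullMeasurableSet, volume_pi_pi]
      rcases eq_or_ne j i with rfl | hj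
      · simp [t]
      · simp [t, hj]
    _ = ENNReal.ofReal (2 ^ (k + 1) * c) := by
      simp_rw [hvol, prod_update_of_mem (mem_univ i), prod_const, card_univ_sdiff]
      rw [card_singleton, Fintype.card_fin, add_tsub_cancel_right,
        show (2 : ℝ) ^ (k + 1) * c = 2 ^ k * (2 * c) by ring,
        ENNReal.ofReal_mul (by positivity : (0 : ℝ) ≤ 2 ^ k),
        ENNReal.ofReal_pow zero_le_two, ENNReal.ofReal_ofNat, mul_comm]

theorem volume_ball_zero_one_le_two_pow {n : ℕ} (hn : 1 ≤ n) :
    volume (ball (0 : EuclideanSpace ℝ (Fin n)) 1) ≤ 2 ^ n := by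
  have hsub : ball (0 : EuclideanSpace ℝ (Fin n)) 1
      ⊆ {w | |w ⟨0, hn⟩| ≤ 1} ∩ closedBall 0 1 := fun w hw ↦
    ⟨(PiLp.norm_apply_le w _).trans (mem_ball_zero_iff.1 hw).le, ball_subset_closedBall hw⟩
  calc _ ≤ _ := measure_mono hsub
    _ ≤ ENNReal.ofReal (2 ^ n * 1) := volume_setOf_abs_apply_le_inter_closedBall_le _ 1
    _ = 2 ^ n := by rw [mul_one, ENNReal.ofReal_pow zero_le_two, ENNReal.ofReal_ofNat]

/-- Reflecting `v / ‖v‖` onto a coordinate vector reduces the slab to a coordinate slab. -/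
theorem volume_setOf_abs_inner_le_inter_closedBall_le {n : ℕ} {v : EuclideanSpace ℝ (Fin n)}
    (hv : v ≠ 0) (c : ℝ) :
    volume ({θ | |inner ℝ θ v| ≤ c} ∩ closedBall 0 1) ≤ ENNReal.ofReal (2 ^ n * c / ‖v‖) := by
  obtain ⟨i, -⟩ : ∃ i, v i ≠ 0 := by
    by_contra! h
    exact hv (by ext i; simp [h i])
  have hv' : 0 < ‖v‖ := norm_pos_iff.2 hv
  set u := ‖v‖⁻¹ • v
  set e := EuclideanSpace.single i (1 : ℝ)
  have hue : ‖u‖ = ‖e‖ := by simp [u, e, norm_smul, hv'.ne']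
  set φ := (ℝ ∙ (u - e))ᗮ.reflection
  have hinner : ∀ θ, inner ℝ θ v = ‖v‖ * φ θ i := by
    intro θ
    have : v = ‖v‖ • u := by simp [u, smul_smul, hv'.ne']
    conv_lhs => rw [this]
    rw [inner_smul_right, ← φ.inner_map_map, Submodule.reflection_sub hue,
      EuclideanSpace.inner_single_right]
    simp
  have hset : {θ | |inner ℝ θ v| ≤ c} ∩ closedBall 0 1
      = φ ⁻¹' ({w | |w i| ≤ c / ‖v‖} ∩ closedBall 0 1) := by
    ext θ
    simp [hinner, abs_mul, abs_of_pos hv', le_div_iff₀ hv', mul_comm]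
  have hmeas : MeasurableSet ({w : EuclideanSpace ℝ (Fin n) | |w i| ≤ c / ‖v‖} ∩ closedBall 0 1) :=
    (isClosed_le (by fun_prop) continuous_const).measurableSet.inter measurableSet_closedBall
  rw [hset, φ.measurePreserving.measure_preimage hmeas.nullMeasurableSet, mul_div_assoc]
  exact volume_setOf_abs_apply_le_inter_closedBall_le i _

theorem exists_norm_eq_one_abs_inner_le {E : Type*} [NormedAddCommGroup E] [InnerProductSpace ℝ E]
    [Nontrivial E] {θ₀ : E} (hθ₀ : ‖θ₀‖ ≤ 1) :
    ∃ θ : E, ‖θ‖ = 1 ∧ ∀ v, |inner ℝ θ₀ v| ≤ |inner ℝ θ v| := by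
  rcases eq_or_ne θ₀ 0 with rfl | hθ₀'
  · obtain ⟨θ, hθ⟩ := exists_norm_eq E zero_le_one
    exact ⟨θ, hθ, fun v ↦ by simp⟩
  have hpos : 0 < ‖θ₀‖ := norm_pos_iff.2 hθ₀'
  refine ⟨‖θ₀‖⁻¹ • θ₀, by simp [norm_smul, hpos.ne'], fun v ↦ ?_⟩
  rw [real_inner_smul_left, abs_mul, abs_of_pos (inv_pos.2 hpos)]
  exact le_mul_of_one_le_left (abs_nonneg _) (one_le_inv₀ hpos |>.2 hθ₀)

/-- The slabs `|⟪θ, v⟫| ≤ c`, `v ∈ S`, cannot cover the unit ball. -/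
theorem exists_norm_eq_one_forall_lt_abs_inner {n : ℕ} (hn : 1 ≤ n)
    (S : Finset (EuclideanSpace ℝ (Fin n))) {r c : ℝ} (hr : 0 < r) (hc : 0 ≤ c)
    (hS : ∀ v ∈ S, r ≤ ‖v‖)
    (hvol : #S * (2 ^ n * c / r) < (volume (ball (0 : EuclideanSpace ℝ (Fin n)) 1)).toReal) :
    ∃ θ : EuclideanSpace ℝ (Fin n), ‖θ‖ = 1 ∧ ∀ v ∈ S, c < |inner ℝ θ v| := by
  set bad := ⋃ v ∈ S, {θ : EuclideanSpace ℝ (Fin n) | |inner ℝ θ v| ≤ c} ∩ closedBall 0 1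
  have hslab : ∀ v ∈ S,
      volume ({θ : EuclideanSpace ℝ (Fin n) | |inner ℝ θ v| ≤ c} ∩ closedBall 0 1)
        ≤ ENNReal.ofReal (2 ^ n * c / r) := fun v hv ↦
    (volume_setOf_abs_inner_le_inter_closedBall_le (norm_pos_iff.1 (hr.trans_le (hS v hv))) c).trans
      (ENNReal.ofReal_le_ofReal (div_le_div_of_nonneg_left (by positivity) hr (hS v hv)))
  have hbad : volume bad < volume (ball (0 : EuclideanSpace ℝ (Fin n)) 1) :=
    calc volume bad ≤ ∑ v ∈ S, ENNReal.ofReal (2 ^ n * c / r) :=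
          (measure_biUnion_finset_le S _).trans (sum_le_sum hslab)
      _ = ENNReal.ofReal (#S * (2 ^ n * c / r)) := by
          rw [sum_const, nsmul_eq_mul, ENNReal.ofReal_mul (Nat.cast_nonneg _),
            ENNReal.ofReal_natCast]
      _ < _ := (ENNReal.ofReal_lt_iff_lt_toReal (by positivity) measure_ball_lt_top.ne).2 hvol
  obtain ⟨θ₀, hθ₀, hθ₀bad⟩ : (ball 0 1 \ bad).Nonempty :=
    Set.sdiff_nonempty.2 fun h ↦ (measure_mono h).not_gt hbad
  have : Nonempty (Fin n) := ⟨⟨0, hn⟩⟩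
  obtain ⟨θ, hθ, hθθ₀⟩ := exists_norm_eq_one_abs_inner_le (mem_ball_zero_iff.1 hθ₀).le
  refine ⟨θ, hθ, fun v hv ↦ (not_le.1 fun h ↦ hθ₀bad ?_).trans_le (hθθ₀ v)⟩
  exact Set.mem_biUnion hv ⟨h, ball_subset_closedBall hθ₀⟩

section offDiagDiffs

variable {ι E : Type*} [Fintype ι]

def offDiagDiffs [AddGroup E] [DecidableEq E] (x : ι → E) : Finset E :=
  univ.offDiag.image fun p ↦ x p.1 - x p.2

variable [SeminormedAddCommGroup E] [DecidableEq E] (x : ι → E)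

theorem sub_mem_offDiagDiffs {i j : ι} (hij : i ≠ j) : x i - x j ∈ offDiagDiffs x :=
  mem_image.2 ⟨(i, j), by simpa using hij, rfl⟩

theorem card_offDiagDiffs_le : #(offDiagDiffs x) ≤ Fintype.card ι ^ 2 :=
  card_image_le.trans <| by simp only [offDiag_card, card_univ, sq, Nat.sub_le]

theorem le_norm_of_mem_offDiagDiffs {δ : ℝ} (hx : ∀ i j, i ≠ j → δ ≤ dist (x i) (x j)) :
    ∀ v ∈ offDiagDiffs x, δ ≤ ‖v‖ := by
  simp only [offDiagDiffs, mem_image, mem_offDiag, mem_univ, true_and]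
  rintro _ ⟨⟨i, j⟩, hij, rfl⟩
  exact (hx i j hij).trans_eq (dist_eq_norm _ _)

end offDiagDiffs

theorem stmt15 (n : ℕ) (hn : 1 ≤ n) :
    ∃ C1 C2 : ℝ, 0 < C1 ∧ 0 < C2 ∧
      ∀ δ : ℝ, 0 < δ → C1 * C2 * δ < 1 →
        ∀ (m : ℕ) (x y : Fin m → EuclideanSpace ℝ (Fin n)),
          (m : ℝ) ≤ C2 ^ (1 / 2 : ℝ) * δ ^ (-(n : ℝ)) →
          (∀ i, x i ∈ closedBall (0 : EuclideanSpace ℝ (Fin n)) 1) →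
          (∀ i, y i ∈ closedBall (0 : EuclideanSpace ℝ (Fin n)) 1) →
          (∀ i j, i ≠ j → δ ≤ dist (x i) (x j)) →
          (∀ i j, i ≠ j → δ ≤ dist (y i) (y j)) →
          ∃ θ : EuclideanSpace ℝ (Fin n), ‖θ‖ = 1 ∧
            ∀ i j, i ≠ j →
              5 * δ ^ (2 * n + 3) < |(inner ℝ θ (x i - x j) : ℝ)| ∧
              5 * δ ^ (2 * n + 3) < |(inner ℝ θ (y i - y j) : ℝ)| := by
  set V := (volume (ball (0 : EuclideanSpace ℝ (Fin n)) 1)).toReal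
  have hV : 0 < V := ENNReal.toReal_pos (measure_ball_pos _ _ one_pos).ne' measure_ball_lt_top.ne
  -- so that `C1 = 10 * 2 ^ n / V` is at least `10`, which keeps `δ` below `1`
  have hV2 : V ≤ 2 ^ n := ENNReal.toReal_le_of_le_ofReal (by positivity) <| by
    simpa [ENNReal.ofReal_pow] using volume_ball_zero_one_le_two_pow hn
  refine ⟨10 * 2 ^ n / V, 1, by positivity, one_pos, fun δ hδ hδV m x y hm _ _ hx hy ↦ ?_⟩
  rw [mul_one, div_mul_eq_mul_div, div_lt_one hV] at hδV
  rw [Real.one_rpow, one_mul, Real.rpow_neg hδ.le, Real.rpow_natCast,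
    ← one_div, le_div_iff₀ (by positivity)] at hm
  have hδ1 : δ ≤ 1 := by nlinarith [pow_pos (two_pos : (0 : ℝ) < 2) n]
  set S := offDiagDiffs x ∪ offDiagDiffs y
  have hS : ∀ v ∈ S, δ ≤ ‖v‖ := by
    simpa only [S, mem_union, or_imp, forall_and] using
      ⟨le_norm_of_mem_offDiagDiffs x hx, le_norm_of_mem_offDiagDiffs y hy⟩
  have hcard : #S ≤ 2 * m ^ 2 := by
    simpa [two_mul] using
      (card_union_le _ _).trans (add_le_add (card_offDiagDiffs_le x) (card_offDiagDiffs_le y))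
  have hvol : #S * (2 ^ n * (5 * δ ^ (2 * n + 3)) / δ) < V :=
    calc #S * (2 ^ n * (5 * δ ^ (2 * n + 3)) / δ)
        ≤ 2 * m ^ 2 * (2 ^ n * (5 * δ ^ (2 * n + 3)) / δ) := by gcongr; exact_mod_cast hcard
      _ = 10 * 2 ^ n * δ ^ 2 * (m * δ ^ n) ^ 2 := by field_simp; ring
      _ ≤ 10 * 2 ^ n * δ * 1 ^ 2 := by gcongr; nlinarith
      _ < V := by rwa [one_pow, mul_one]
  obtain ⟨θ, hθ, hθS⟩ := exists_norm_eq_one_forall_lt_abs_inner hn S hδ (by positivity) hS hvol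
  exact ⟨θ, hθ, fun i j hij ↦ ⟨hθS _ (mem_union_left _ (sub_mem_offDiagDiffs x hij)),
    hθS _ (mem_union_right _ (sub_mem_offDiagDiffs y hij))⟩⟩
end
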